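/- (Gamma-sum identity used to conclude the proof of Theorem 1.) For every integer j ≥ 1 and every real ν > 2, ∑_{k=1}^{j−1} Γ(j) Γ(k + ν/2) / (Γ(k) Γ(j + ν/2)) = 2(j−1)/(2+ν), where Γ is the real Gamma function and the sum is empty (equal to 0) when j = 1. -/

import Mathlib

/-! With `a = ν / 2`, the summand is `Γ(j) / Γ(j + a)` times `Γ(k + a) / Γ(k)`, and the latter
telescopes: by `Γ(s + 1) = s Γ(s)`, the sequence `g k = (k - 1) Γ(k + a) / Γ(k)` satisfies
`g (k + 1) - g k = (1 + a) Γ(k + a) / Γ(k)`, so `(1 + a) ∑_{k=1}^{j-1} Γ(k + a) / Γ(k) = g j`. -/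

open Finset Real

theorem mul_sum_Icc_Gamma_add_div_Gamma (a : ℝ) (ha : ∀ n : ℕ, (n : ℝ) + 1 + a ≠ 0) (n : ℕ) :
    (1 + a) * ∑ k ∈ Icc 1 n, Gamma (k + a) / Gamma k = n * Gamma (n + 1 + a) / Gamma (n + 1) := by
  induction n with
  | zero => simp
  | succ n ih =>
    rw [sum_Icc_succ_top (by omega), mul_add, ih]
    push_cast
    rw [Gamma_add_one (s := (n : ℝ) + 1) (by positivity),
      show (n : ℝ) + 1 + 1 + a = n + 1 + a + 1 by ring, Gamma_add_one (ha n)]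
    field_simp
    ring

/-- (Gamma-sum identity used to conclude the proof of Theorem 1.) For every integer
`j ≥ 1` and every real `ν > 2`,
`∑_{k=1}^{j−1} Γ(j) Γ(k + ν/2) / (Γ(k) Γ(j + ν/2)) = 2(j−1)/(2+ν)`,
where `Γ` is the real Gamma function and the sum is empty (equal to `0`) when `j = 1`. -/
theorem gamma_sum_identity (j : ℕ) (hj : 1 ≤ j) (ν : ℝ) (hν : 2 < ν) :
    ∑ k ∈ Finset.Icc 1 (j - 1),
        Real.Gamma (j : ℝ) * Real.Gamma ((k : ℝ) + ν / 2) /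
          (Real.Gamma (k : ℝ) * Real.Gamma ((j : ℝ) + ν / 2))
      = 2 * ((j : ℝ) - 1) / (2 + ν) := by
  obtain ⟨m, rfl⟩ := Nat.exists_eq_add_of_le' hj
  have hsum : ∑ k ∈ Icc 1 m, Gamma (k + ν / 2) / Gamma k
      = m * Gamma (m + 1 + ν / 2) / Gamma (m + 1) / (1 + ν / 2) := by
    rw [eq_div_iff (by positivity), mul_comm,
      mul_sum_Icc_Gamma_add_div_Gamma (ν / 2) (fun n => by positivity) m]
  rw [Nat.add_sub_cancel]
  push_cast
  calc ∑ k ∈ Icc 1 m, Gamma (m + 1) * Gamma (k + ν / 2) / (Gamma k * Gamma (m + 1 + ν / 2))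
      = Gamma (m + 1) / Gamma (m + 1 + ν / 2) * ∑ k ∈ Icc 1 m, Gamma (k + ν / 2) / Gamma k := by
        rw [mul_sum]
        exact sum_congr rfl fun k _ => by ring
    _ = 2 * (m + 1 - 1) / (2 + ν) := by
        rw [hsum]
        field_simp
        ring
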